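/- arXiv:math/0409152 — 3 statements merged into one kernel-verified Lean document; each statement's English description precedes it below -/
import Mathlib

section
/- With notation as above, define the subtraction operation on the set Λ^⋔ of Lagrangian subspaces transversal to Λ by (Γ − Δ)(l) = σ(I_Γ l, I_Δ l) for l ∈ Λ*. Then (Γ − Δ) is a quadratic form on Λ*, and for any three Γ, Δ, Π ∈ Λ^⋔ one has the cocycle identity (Γ − Δ) + (Δ − Π) = (Γ − Π). -/
/-- Lagrangian = isotropic and coisotropic subspace. -/
def IsLagrangian {E : Type*} [AddCommGroup E] [Module ℝ E]
    (ω : E →ₗ[ℝ] E →ₗ[ℝ] ℝ) (Λ : Submodule ℝ E) : Prop :=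
  (∀ x ∈ Λ, ∀ y ∈ Λ, ω x y = 0) ∧ ∀ y : E, (∀ x ∈ Λ, ω x y = 0) → y ∈ Λ

/-- Cocycle identity for the affine structure on `Λ^⋔`: with the subtraction
`(Γ - Δ)(l) = σ(I_Γ l, I_Δ l)`, where `I_Γ l` is the unique element of `Γ`
with `σ(I_Γ l, ·)|_Λ = l`, one has `(Γ - Δ) + (Δ - Π) = (Γ - Π)` as quadratic
forms on `Λ*`. -/
theorem lagrangian_affine_cocycle
    {E : Type*} [NormedAddCommGroup E] [NormedSpace ℝ E] [FiniteDimensional ℝ E]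
    (n : ℕ) (hdim : Module.finrank ℝ E = 2 * n)
    (ω : E →ₗ[ℝ] E →ₗ[ℝ] ℝ) (halt : ∀ v : E, ω v v = 0)
    (hnondeg : ∀ v : E, (∀ w : E, ω v w = 0) → v = 0)
    (Λ Γ Δ P : Submodule ℝ E)
    (hΛ : IsLagrangian ω Λ) (hΓ : IsLagrangian ω Γ)
    (hΔ : IsLagrangian ω Δ) (hP : IsLagrangian ω P)
    (htransΓ : Γ ⊓ Λ = ⊥) (htransΔ : Δ ⊓ Λ = ⊥) (htransP : P ⊓ Λ = ⊥) :
    ∀ (l : Module.Dual ℝ Λ) (x y z : E), x ∈ Γ → y ∈ Δ → z ∈ P →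
      (ω x).domRestrict Λ = l → (ω y).domRestrict Λ = l →
      (ω z).domRestrict Λ = l →
      ω x y + ω y z = ω x z := by
  intro l x y z hx hy hz hlx hly hlz
  have hanti : ∀ u v : E, ω u v = - ω v u := by
    intro u v
    have h := halt (u + v)
    simp only [map_add, LinearMap.add_apply, halt u, halt v] at h
    linarith
  have hres : ∀ v ∈ Λ, ω x v = ω z v ∧ ω y v = ω z v := by
    intro v hv
    constructor
    · have := congrArg (fun f => f ⟨v, hv⟩) (hlx.trans hlz.symm)
      simpa using this
    · have := congrArg (fun f => f ⟨v, hv⟩) (hly.trans hlz.symm)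
      simpa using this
  have hxz : x - z ∈ Λ := by
    apply hΛ.2
    intro v hv
    have h1 := (hres v hv).1
    have h2 := hanti v x
    have h3 := hanti v z
    simp only [map_sub]
    linarith
  have hyz : y - z ∈ Λ := by
    apply hΛ.2
    intro v hv
    have h1 := (hres v hv).2
    have h2 := hanti v y
    have h3 := hanti v z
    simp only [map_sub]
    linarith
  have h0 : ω (x - z) (y - z) = 0 := hΛ.1 _ hxz _ hyz
  simp only [map_sub, LinearMap.sub_apply] at h0
  have h4 := hanti z y
  have h5 := halt z
  linarith
end

section
/- Let S_t be a smooth curve of symmetric n×n matrices with Ṡ_t invertible, and let Ã, B, C, D be n×n matrices such that the matrix Möbius transform S̃_t = (C + D S_t)(A + B S_t)^{-1} is defined (A + B S_t invertible) and yields a coordinate representation of the same curve of Lagrangian subspaces in another symplectic basis. Then the matrix Schwarzian 𝕊(S̃)_τ = (1/2) (d/dτ S̃)^{-1} S̃^{(3)} − (3/4)((d/dτ S̃)^{-1} S̃̈)² is similar (conjugate) to 𝕊(S)_τ. -/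
open Matrix

set_option maxHeartbeats 1000000

/-- Entrywise `k`-th derivative of a matrix-valued curve. -/
noncomputable def matDeriv {ι : Type*} [Fintype ι] (k : ℕ)
    (S : ℝ → Matrix ι ι ℝ) (τ : ℝ) : Matrix ι ι ℝ :=
  Matrix.of fun i j => iteratedDeriv k (fun t => S t i j) τ

/-- The matrix Schwarzian `𝕊(S)_τ = (1/2) Ṡ⁻¹ S⁽³⁾ - (3/4)(Ṡ⁻¹ S̈)²`. -/
noncomputable def matSchwarzian {ι : Type*} [Fintype ι] [DecidableEq ι]
    (S : ℝ → Matrix ι ι ℝ) (τ : ℝ) : Matrix ι ι ℝ :=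
  (1 / 2 : ℝ) • ((matDeriv 1 S τ)⁻¹ * matDeriv 3 S τ)
    - (3 / 4 : ℝ) • ((matDeriv 1 S τ)⁻¹ * matDeriv 2 S τ) ^ 2

attribute [local instance] Matrix.linftyOpNormedRing Matrix.linftyOpNormedAlgebra

section Aux

variable {n : ℕ}

local notation "Mat" => Matrix (Fin n) (Fin n) ℝ

private noncomputable def entryCLM (i j : Fin n) : Mat →L[ℝ] ℝ :=
  LinearMap.toContinuousLinearMap
    { toFun := fun M => M i j, map_add' := fun _ _ => rfl, map_smul' := fun _ _ => rfl }

private lemma hasDerivAt_entrywise {f : ℝ → Mat} {F : Mat} {t : ℝ} :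
    HasDerivAt f F t ↔ ∀ i j, HasDerivAt (fun s => f s i j) (F i j) t := by
  constructor
  · intro h i j
    have := ((entryCLM i j).hasFDerivAt.comp_hasDerivAt t h)
    exact this
  · intro h
    have h1 : HasDerivAt (fun s => ∑ i : Fin n, ∑ j : Fin n,
        Matrix.single i j (f s i j)) (∑ i : Fin n, ∑ j : Fin n,
        Matrix.single i j (F i j)) t := by
      apply HasDerivAt.fun_sum; intro i _
      apply HasDerivAt.fun_sum; intro j _
      have := (h i j).smul_const (Matrix.single i j (1:ℝ))
      simpa [Matrix.smul_single] using this
    have e1 : (fun s => ∑ i : Fin n, ∑ j : Fin n, Matrix.single i j (f s i j)) = f := by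
      funext s; exact (matrix_eq_sum_single (f s)).symm
    have e2 : (∑ i : Fin n, ∑ j : Fin n, Matrix.single i j (F i j)) = F :=
      (matrix_eq_sum_single F).symm
    rwa [e1, e2] at h1

private lemma matDeriv_one_eq {S : ℝ → Mat} {F : ℝ → Mat}
    (h : ∀ t, HasDerivAt S (F t) t) : matDeriv 1 S = F := by
  funext t
  ext i j
  simp only [matDeriv, Matrix.of_apply, iteratedDeriv_one]
  exact (hasDerivAt_entrywise.1 (h t) i j).deriv

private lemma matDeriv_succ (k : ℕ) (S : ℝ → Mat) :
    matDeriv (k+1) S = matDeriv k (matDeriv 1 S) := by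
  funext t; ext i j
  simp only [matDeriv, Matrix.of_apply, iteratedDeriv_one, iteratedDeriv_succ']
  rfl

private lemma matDeriv_succ' (k : ℕ) (S : ℝ → Mat) :
    matDeriv (k+1) S = matDeriv 1 (matDeriv k S) := by
  funext t; ext i j
  simp only [matDeriv, Matrix.of_apply, iteratedDeriv_one, iteratedDeriv_succ]
  rfl

private lemma inner_key {A : Type*} [Ring A] [Algebra ℝ A] (r s1 s2 s3 e : A)
    (h5 : r * s1 = 1) (h6 : s1 * r = 1) :
    (1/2 : ℝ) • (r * (-(s1 * (e * (s2 - (s1*e*s1 + s1*e*s1))))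
        + ((s3 - (((s2*e + s1*(-(e*s1*e)))*s1 + (s1*e)*s2)
            + ((s2*e + s1*(-(e*s1*e)))*s1 + (s1*e)*s2)))
        + -((s2 - (s1*e*s1 + s1*e*s1)) * (e*s1)))))
      - (3/4 : ℝ) • ((r * (s2 - (s1*e*s1 + s1*e*s1))) * (r * (s2 - (s1*e*s1 + s1*e*s1))))
    = (1/2 : ℝ) • (r*s3) - (3/4 : ℝ) • ((r*s2)*(r*s2)) := by
  have hr : ∀ x, r * (s1 * x) = x := fun x => by rw [← mul_assoc, h5, one_mul]
  have hs : ∀ x, s1 * (r * x) = x := fun x => by rw [← mul_assoc, h6, one_mul]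
  simp only [mul_sub, sub_mul, mul_add, add_mul, mul_neg, neg_mul, mul_assoc, hr, hs,
    smul_add, smul_sub, smul_neg, neg_neg, neg_add, sub_eq_add_neg]
  module

private lemma hasDerivAt_matDeriv {S : ℝ → Mat}
    (hsm : ∀ i j, ContDiff ℝ (⊤ : ℕ∞) fun t => S t i j)
    (k : ℕ) (t : ℝ) : HasDerivAt (matDeriv k S) (matDeriv (k+1) S t) t := by
  rw [hasDerivAt_entrywise]
  intro i j
  have hd : Differentiable ℝ (iteratedDeriv k (fun t => S t i j)) :=
    (hsm i j).differentiable_iteratedDeriv k (by exact_mod_cast ENat.coe_lt_top k)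
  have := (hd t).hasDerivAt
  rw [← iteratedDeriv_succ] at this
  exact this

private lemma matDeriv_zero_eq (S : ℝ → Mat) : matDeriv 0 S = S := by
  funext t; ext i j; simp [matDeriv]

private lemma hasDerivAt_inv_mat {f : ℝ → Mat} {f' : Mat} {t : ℝ}
    (h : HasDerivAt f f' t) (hu : IsUnit (f t).det) :
    HasDerivAt (fun s => (f s)⁻¹) (-((f t)⁻¹ * f' * (f t)⁻¹)) t := by
  have hut : IsUnit (f t) := (Matrix.isUnit_iff_isUnit_det _).2 hu
  have hF := (hasFDerivAt_ringInverse (𝕜 := ℝ) hut.unit)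
  rw [IsUnit.unit_spec] at hF
  have h2 := hF.comp_hasDerivAt t h
  have e : (Ring.inverse ∘ f) = fun s => (f s)⁻¹ := by
    funext s; simp [Function.comp, Matrix.nonsing_inv_eq_ringInverse]
  rw [e] at h2
  refine h2.congr_deriv (Eq.symm ?_)
  simp only [ContinuousLinearMap.neg_apply, ContinuousLinearMap.mulLeftRight_apply]
  rw [Matrix.coe_units_inv, IsUnit.unit_spec]

private lemma hasDerivAt_transpose {f : ℝ → Mat} {f' : Mat} {t : ℝ}
    (h : HasDerivAt f f' t) : HasDerivAt (fun s => (f s)ᵀ) f'ᵀ t := by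
  rw [hasDerivAt_entrywise] at h ⊢
  intro i j
  exact h j i

end Aux

/-- If two coordinate representations of the same curve of Lagrangian
subspaces are related by a matrix Möbius transformation
`S̃ = (C + D S)(A + B S)⁻¹` coming from a symplectic change of coordinates
(i.e. the block matrix of `A,B,C,D` is symplectic), then the matrix
Schwarzians are similar. -/
theorem matSchwarzian_moebius_similar {n : ℕ}
    (S : ℝ → Matrix (Fin n) (Fin n) ℝ)
    (hsm : ∀ i j, ContDiff ℝ (⊤ : ℕ∞) fun t => S t i j)
    (hsymm : ∀ t, (S t).IsSymm)
    (hreg : ∀ t, IsUnit (matDeriv 1 S t).det)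
    (A B C D : Matrix (Fin n) (Fin n) ℝ)
    (hsymp :
      (Matrix.fromBlocks A B C D)ᵀ * Matrix.fromBlocks 0 1 (-1) 0
          * Matrix.fromBlocks A B C D
        = Matrix.fromBlocks 0 1 (-1) 0)
    (hdef : ∀ t, IsUnit (A + B * S t).det) (τ : ℝ) :
    ∃ P : Matrix (Fin n) (Fin n) ℝ, IsUnit P.det ∧
      matSchwarzian (fun t => (C + D * S t) * (A + B * S t)⁻¹) τ
        = P * matSchwarzian S τ * P⁻¹ := by
  classical
  -- block relations
  have hrel : (Aᵀ*C = Cᵀ*A) ∧ (Bᵀ*D = Dᵀ*B) ∧ (Aᵀ*D - Cᵀ*B = 1) ∧ (Dᵀ*A - Bᵀ*C = 1)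
      ∧ (A*Bᵀ = B*Aᵀ) := by
    rw [fromBlocks_transpose] at hsymp
    rw [fromBlocks_multiply, fromBlocks_multiply] at hsymp
    rw [fromBlocks_inj] at hsymp
    obtain ⟨e11, e12, e21, e22⟩ := hsymp
    simp only [Matrix.mul_zero, Matrix.zero_mul, Matrix.mul_one, Matrix.one_mul,
      Matrix.mul_neg, Matrix.neg_mul, zero_add, add_zero] at e11 e12 e21 e22
    have hAC : Aᵀ*C = Cᵀ*A := by linear_combination (norm := noncomm_ring) e11
    have hBD : Bᵀ*D = Dᵀ*B := by linear_combination (norm := noncomm_ring) e22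
    have hAD : Aᵀ*D - Cᵀ*B = 1 := by linear_combination (norm := noncomm_ring) e12
    have hDA : Dᵀ*A - Bᵀ*C = 1 := by linear_combination (norm := noncomm_ring) -e21
    refine ⟨hAC, hBD, hAD, hDA, ?_⟩
    have hLM : (fromBlocks Dᵀ (-Bᵀ) (-Cᵀ) Aᵀ) * (fromBlocks A B C D) = 1 := by
      rw [fromBlocks_multiply]
      rw [show (1 : Matrix (Fin n ⊕ Fin n) (Fin n ⊕ Fin n) ℝ) = fromBlocks 1 0 0 1 from
        (fromBlocks_one).symm]
      rw [fromBlocks_inj]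
      exact ⟨by linear_combination (norm := noncomm_ring) hDA,
        by linear_combination (norm := noncomm_ring) -hBD,
        by linear_combination (norm := noncomm_ring) hAC,
        by linear_combination (norm := noncomm_ring) hAD⟩
    have hML := mul_eq_one_comm.mp hLM
    rw [fromBlocks_multiply] at hML
    rw [show (1 : Matrix (Fin n ⊕ Fin n) (Fin n ⊕ Fin n) ℝ) = fromBlocks 1 0 0 1 from
      (fromBlocks_one).symm] at hML
    rw [fromBlocks_inj] at hML
    obtain ⟨f11, f12, f21, f22⟩ := hML
    linear_combination (norm := noncomm_ring) -f12
  obtain ⟨hAC, hBD, hAD, hDA, hABt⟩ := hrel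
  -- notation
  set T : ℝ → Matrix (Fin n) (Fin n) ℝ := fun t => A + B * S t with hT_def
  set S1 : ℝ → Matrix (Fin n) (Fin n) ℝ := matDeriv 1 S with hS1_def
  set S2 : ℝ → Matrix (Fin n) (Fin n) ℝ := matDeriv 2 S with hS2_def
  set S3 : ℝ → Matrix (Fin n) (Fin n) ℝ := matDeriv 3 S with hS3_def
  set Ti : ℝ → Matrix (Fin n) (Fin n) ℝ := fun t => (T t)⁻¹ with hTi_def
  set N : ℝ → Matrix (Fin n) (Fin n) ℝ := fun t => ((T t)ᵀ)⁻¹ with hN_def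
  -- symmetry of S and S1
  have hSsymm : ∀ t, (S t)ᵀ = S t := fun t => (hsymm t).eq
  have hS1symm : ∀ t, (S1 t)ᵀ = S1 t := by
    intro t
    ext i j
    show S1 t j i = S1 t i j
    simp only [hS1_def, matDeriv, Matrix.of_apply]
    congr 1
    funext s
    exact (hsymm s).apply i j
  -- basic derivative facts
  have hS1at : ∀ t, HasDerivAt S (S1 t) t := by
    intro t
    have := hasDerivAt_matDeriv hsm 0 t
    rwa [matDeriv_zero_eq] at this
  have hS2at : ∀ t, HasDerivAt S1 (S2 t) t := fun t => hasDerivAt_matDeriv hsm 1 t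
  have hS3at : ∀ t, HasDerivAt S2 (S3 t) t := fun t => hasDerivAt_matDeriv hsm 2 t
  have hTat : ∀ t, HasDerivAt T (B * S1 t) t := by
    intro t
    exact ((hS1at t).const_mul B).const_add A
  have hdetTt : ∀ t, IsUnit ((T t)ᵀ).det := by
    intro t; rw [Matrix.det_transpose]; exact hdef t
  have hTiat : ∀ t, HasDerivAt Ti (-(Ti t * (B * S1 t) * Ti t)) t := by
    intro t
    exact hasDerivAt_inv_mat (hTat t) (hdef t)
  have hNat : ∀ t, HasDerivAt N (-(N t * (S1 t * Bᵀ) * N t)) t := by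
    intro t
    have h1 := hasDerivAt_inv_mat (hasDerivAt_transpose (hTat t)) (hdetTt t)
    rwa [Matrix.transpose_mul, hS1symm] at h1
  -- algebraic cancellation facts
  have hTTi : ∀ t, T t * Ti t = 1 := fun t => Matrix.mul_nonsing_inv _ (hdef t)
  have hTiT : ∀ t, Ti t * T t = 1 := fun t => Matrix.nonsing_inv_mul _ (hdef t)
  have hTtN : ∀ t, (T t)ᵀ * N t = 1 := fun t => Matrix.mul_nonsing_inv _ (hdetTt t)
  have hNTt : ∀ t, N t * (T t)ᵀ = 1 := fun t => Matrix.nonsing_inv_mul _ (hdetTt t)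
  -- transpose of T
  have hTt : ∀ t, (T t)ᵀ = Aᵀ + S t * Bᵀ := by
    intro t
    rw [hT_def]
    simp [Matrix.transpose_add, Matrix.transpose_mul, hSsymm t]
  -- symmetry-type identity
  have hM : ∀ t, (T t)ᵀ * (C + D * S t) = (C + D * S t)ᵀ * T t := by
    intro t
    rw [hTt, hT_def]
    simp only [Matrix.transpose_add, Matrix.transpose_mul, hSsymm t]
    have h1 := congrArg (fun X => X * S t) hAD
    have h2 := congrArg (fun X => S t * X) hDA
    linear_combination (norm := noncomm_ring) hAC + h1 + (S t) * hBD * (S t) - h2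
  -- D - (C + D S) Ti B = N
  have hDN : ∀ t, D - (C + D * S t) * (Ti t * B) = N t := by
    intro t
    refine (Matrix.inv_eq_right_inv ?_).symm
    have expand : (T t)ᵀ * (D - (C + D * S t) * (Ti t * B))
        = (T t)ᵀ * D - ((T t)ᵀ * (C + D * S t)) * Ti t * B := by
      noncomm_ring
    rw [expand, hM t]
    have collapse : (C + D * S t)ᵀ * T t * Ti t * B = (C + D * S t)ᵀ * B := by
      rw [Matrix.mul_assoc ((C + D * S t)ᵀ), hTTi t, Matrix.mul_one]
    rw [collapse, hTt]
    simp only [Matrix.transpose_add, Matrix.transpose_mul, hSsymm t]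
    have h2 := congrArg (fun X => S t * X) hBD
    linear_combination (norm := noncomm_ring) hAD + h2
  -- E symmetry: Bᵀ N = Ti B
  have hBTt : ∀ t, B * (T t)ᵀ = T t * Bᵀ := by
    intro t
    rw [hTt, hT_def]
    linear_combination (norm := noncomm_ring) -hABt
  have hE : ∀ t, Bᵀ * N t = Ti t * B := by
    intro t
    calc Bᵀ * N t = Ti t * T t * Bᵀ * N t := by rw [hTiT t, Matrix.one_mul]
    _ = Ti t * (T t * Bᵀ) * N t := by noncomm_ring
    _ = Ti t * (B * (T t)ᵀ) * N t := by rw [hBTt t]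
    _ = Ti t * B * ((T t)ᵀ * N t) := by noncomm_ring
    _ = Ti t * B := by rw [hTtN t, Matrix.mul_one]
  -- first derivative of the Moebius transform
  have hUat : ∀ t, HasDerivAt (fun t => (C + D * S t) * Ti t) (N t * S1 t * Ti t) t := by
    intro t
    have h1 := (((hS1at t).const_mul D).const_add C).mul (hTiat t)
    refine h1.congr_deriv (Eq.symm ?_)
    rw [← hDN t]
    noncomm_ring
  have hMd1 : matDeriv 1 (fun t => (C + D * S t) * Ti t) = fun t => N t * S1 t * Ti t :=
    matDeriv_one_eq hUat
  -- second derivative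
  have hU1at : ∀ t, HasDerivAt (fun t => N t * S1 t * Ti t)
      (N t * (S2 t - (S1 t * (Ti t * B) * S1 t + S1 t * (Ti t * B) * S1 t)) * Ti t) t := by
    intro t
    have h1 := ((hNat t).mul (hS2at t)).mul (hTiat t)
    simp only [Pi.mul_apply] at h1
    refine h1.congr_deriv (Eq.symm ?_)
    have key : N t * (S1 t * Bᵀ) * N t = N t * S1 t * (Ti t * B) := by
      rw [Matrix.mul_assoc (N t), Matrix.mul_assoc (S1 t), hE t, ← Matrix.mul_assoc,
        ← Matrix.mul_assoc]
    linear_combination (norm := noncomm_ring) key * (S1 t * Ti t)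
  have hMd2 : matDeriv 2 (fun t => (C + D * S t) * Ti t)
      = fun t => N t * (S2 t - (S1 t * (Ti t * B) * S1 t + S1 t * (Ti t * B) * S1 t)) * Ti t := by
    rw [matDeriv_succ 1, hMd1]
    exact matDeriv_one_eq hU1at
  -- third derivative
  have hEat : ∀ t, HasDerivAt (fun t => Ti t * B) (-(Ti t * (B * S1 t) * Ti t) * B) t :=
    fun t => (hTiat t).mul_const B
  have hQat : ∀ t, HasDerivAt (fun t => S1 t * (Ti t * B) * S1 t)
      ((S2 t * (Ti t * B) + S1 t * (-(Ti t * (B * S1 t) * Ti t) * B)) * S1 t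
        + (S1 t * (Ti t * B)) * S2 t) t :=
    fun t => ((hS2at t).mul (hEat t)).mul (hS2at t)
  have hGat : ∀ t, HasDerivAt
      (fun t => S2 t - (S1 t * (Ti t * B) * S1 t + S1 t * (Ti t * B) * S1 t))
      (S3 t - (((S2 t * (Ti t * B) + S1 t * (-(Ti t * (B * S1 t) * Ti t) * B)) * S1 t
        + (S1 t * (Ti t * B)) * S2 t) + ((S2 t * (Ti t * B) + S1 t * (-(Ti t * (B * S1 t) * Ti t) * B)) * S1 t
        + (S1 t * (Ti t * B)) * S2 t))) t :=
    fun t => (hS3at t).sub ((hQat t).add (hQat t))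
  have hVat : ∀ t, HasDerivAt
      (fun t => N t * (S2 t - (S1 t * (Ti t * B) * S1 t + S1 t * (Ti t * B) * S1 t)) * Ti t)
      ((-(N t * (S1 t * Bᵀ) * N t) * (S2 t - (S1 t * (Ti t * B) * S1 t + S1 t * (Ti t * B) * S1 t))
        + N t * (S3 t - (((S2 t * (Ti t * B) + S1 t * (-(Ti t * (B * S1 t) * Ti t) * B)) * S1 t
            + (S1 t * (Ti t * B)) * S2 t) + ((S2 t * (Ti t * B) + S1 t * (-(Ti t * (B * S1 t) * Ti t) * B)) * S1 t
            + (S1 t * (Ti t * B)) * S2 t)))) * Ti t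
        + (N t * (S2 t - (S1 t * (Ti t * B) * S1 t + S1 t * (Ti t * B) * S1 t)))
            * -(Ti t * (B * S1 t) * Ti t)) t :=
    fun t => ((hNat t).mul (hGat t)).mul (hTiat t)
  have hMd3 : matDeriv 3 (fun t => (C + D * S t) * Ti t)
      = fun t => ((-(N t * (S1 t * Bᵀ) * N t) * (S2 t - (S1 t * (Ti t * B) * S1 t + S1 t * (Ti t * B) * S1 t))
        + N t * (S3 t - (((S2 t * (Ti t * B) + S1 t * (-(Ti t * (B * S1 t) * Ti t) * B)) * S1 t
            + (S1 t * (Ti t * B)) * S2 t) + ((S2 t * (Ti t * B) + S1 t * (-(Ti t * (B * S1 t) * Ti t) * B)) * S1 t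
            + (S1 t * (Ti t * B)) * S2 t)))) * Ti t
        + (N t * (S2 t - (S1 t * (Ti t * B) * S1 t + S1 t * (Ti t * B) * S1 t)))
            * -(Ti t * (B * S1 t) * Ti t)) := by
    rw [matDeriv_succ' 2, hMd2]
    exact matDeriv_one_eq hVat
  -- final algebra at τ
  have hRS1 : (S1 τ)⁻¹ * S1 τ = 1 := Matrix.nonsing_inv_mul _ (hreg τ)
  have hS1R : S1 τ * (S1 τ)⁻¹ = 1 := Matrix.mul_nonsing_inv _ (hreg τ)
  set R := (S1 τ)⁻¹ with hR_def
  have hUinv : (N τ * S1 τ * Ti τ)⁻¹ = T τ * R * (T τ)ᵀ := by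
    apply Matrix.inv_eq_right_inv
    calc N τ * S1 τ * Ti τ * (T τ * R * (T τ)ᵀ)
        = N τ * (S1 τ * ((Ti τ * T τ) * (R * (T τ)ᵀ))) := by noncomm_ring
      _ = N τ * (S1 τ * (R * (T τ)ᵀ)) := by rw [hTiT τ, Matrix.one_mul]
      _ = N τ * ((S1 τ * R) * (T τ)ᵀ) := by noncomm_ring
      _ = N τ * (T τ)ᵀ := by rw [hS1R, Matrix.one_mul]
      _ = 1 := hNTt τ
  have key2 : ∀ X : Matrix (Fin n) (Fin n) ℝ,
      T τ * R * (T τ)ᵀ * (N τ * X * Ti τ) = T τ * (R * X) * Ti τ := by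
    intro X
    calc T τ * R * (T τ)ᵀ * (N τ * X * Ti τ)
        = T τ * (R * (((T τ)ᵀ * N τ) * (X * Ti τ))) := by noncomm_ring
      _ = T τ * (R * (X * Ti τ)) := by rw [hTtN τ, Matrix.one_mul]
      _ = T τ * (R * X) * Ti τ := by noncomm_ring
  have sq : ∀ X : Matrix (Fin n) (Fin n) ℝ,
      (T τ * X * Ti τ) ^ 2 = T τ * (X * X) * Ti τ := by
    intro X
    rw [pow_two]
    calc (T τ * X * Ti τ) * (T τ * X * Ti τ)
        = T τ * (X * ((Ti τ * T τ) * (X * Ti τ))) := by noncomm_ring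
      _ = T τ * (X * (X * Ti τ)) := by rw [hTiT τ, Matrix.one_mul]
      _ = T τ * (X * X) * Ti τ := by noncomm_ring
  have smulconj : ∀ (c : ℝ) (X : Matrix (Fin n) (Fin n) ℝ),
      c • (T τ * X * Ti τ) = T τ * (c • X) * Ti τ := by
    intro c X
    rw [mul_smul_comm, smul_mul_assoc]
  have hMd3' : matDeriv 3 (fun t => (C + D * S t) * Ti t) τ
      = N τ * (-(S1 τ * ((Ti τ * B) * (S2 τ - (S1 τ * (Ti τ * B) * S1 τ + S1 τ * (Ti τ * B) * S1 τ))))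
      + ((S3 τ - (((S2 τ * (Ti τ * B) + S1 τ * (-((Ti τ * B) * S1 τ * (Ti τ * B)))) * S1 τ
        + (S1 τ * (Ti τ * B)) * S2 τ) + ((S2 τ * (Ti τ * B) + S1 τ * (-((Ti τ * B) * S1 τ * (Ti τ * B)))) * S1 τ
        + (S1 τ * (Ti τ * B)) * S2 τ)))
      + -((S2 τ - (S1 τ * (Ti τ * B) * S1 τ + S1 τ * (Ti τ * B) * S1 τ)) * ((Ti τ * B) * S1 τ)))) * Ti τ := by
    simp only [hMd3]
    have key : N τ * (S1 τ * Bᵀ) * N τ = N τ * S1 τ * (Ti τ * B) := by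
      rw [Matrix.mul_assoc (N τ), Matrix.mul_assoc (S1 τ), hE τ, ← Matrix.mul_assoc,
        ← Matrix.mul_assoc]
    linear_combination (norm := noncomm_ring) -key * ((S2 τ - (S1 τ * (Ti τ * B) * S1 τ + S1 τ * (Ti τ * B) * S1 τ)) * Ti τ)
  refine ⟨T τ, hdef τ, ?_⟩
  have hfun : (fun t => (C + D * S t) * (A + B * S t)⁻¹)
      = (fun t => (C + D * S t) * Ti t) := rfl
  have hPinv : (T τ)⁻¹ = Ti τ := rfl
  rw [hfun, hPinv]
  calc matSchwarzian (fun t => (C + D * S t) * Ti t) τ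
      = (1/2 : ℝ) • (T τ * R * (T τ)ᵀ * (N τ * (-(S1 τ * ((Ti τ * B) * (S2 τ - (S1 τ * (Ti τ * B) * S1 τ + S1 τ * (Ti τ * B) * S1 τ))))
      + ((S3 τ - (((S2 τ * (Ti τ * B) + S1 τ * (-((Ti τ * B) * S1 τ * (Ti τ * B)))) * S1 τ
        + (S1 τ * (Ti τ * B)) * S2 τ) + ((S2 τ * (Ti τ * B) + S1 τ * (-((Ti τ * B) * S1 τ * (Ti τ * B)))) * S1 τ
        + (S1 τ * (Ti τ * B)) * S2 τ)))
      + -((S2 τ - (S1 τ * (Ti τ * B) * S1 τ + S1 τ * (Ti τ * B) * S1 τ)) * ((Ti τ * B) * S1 τ)))) * Ti τ))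
        - (3/4 : ℝ) • (T τ * R * (T τ)ᵀ * (N τ * (S2 τ - (S1 τ * (Ti τ * B) * S1 τ + S1 τ * (Ti τ * B) * S1 τ)) * Ti τ)) ^ 2 := by
        rw [matSchwarzian]
        simp only [hMd1, hMd2]
        rw [hMd3', hUinv]
    _ = (1/2 : ℝ) • (T τ * (R * (-(S1 τ * ((Ti τ * B) * (S2 τ - (S1 τ * (Ti τ * B) * S1 τ + S1 τ * (Ti τ * B) * S1 τ))))
      + ((S3 τ - (((S2 τ * (Ti τ * B) + S1 τ * (-((Ti τ * B) * S1 τ * (Ti τ * B)))) * S1 τ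
        + (S1 τ * (Ti τ * B)) * S2 τ) + ((S2 τ * (Ti τ * B) + S1 τ * (-((Ti τ * B) * S1 τ * (Ti τ * B)))) * S1 τ
        + (S1 τ * (Ti τ * B)) * S2 τ)))
      + -((S2 τ - (S1 τ * (Ti τ * B) * S1 τ + S1 τ * (Ti τ * B) * S1 τ)) * ((Ti τ * B) * S1 τ))))) * Ti τ)
        - (3/4 : ℝ) • (T τ * ((R * (S2 τ - (S1 τ * (Ti τ * B) * S1 τ + S1 τ * (Ti τ * B) * S1 τ))) * (R * (S2 τ - (S1 τ * (Ti τ * B) * S1 τ + S1 τ * (Ti τ * B) * S1 τ)))) * Ti τ) := by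
        rw [key2, key2, sq]
    _ = T τ * ((1/2 : ℝ) • (R * (-(S1 τ * ((Ti τ * B) * (S2 τ - (S1 τ * (Ti τ * B) * S1 τ + S1 τ * (Ti τ * B) * S1 τ))))
      + ((S3 τ - (((S2 τ * (Ti τ * B) + S1 τ * (-((Ti τ * B) * S1 τ * (Ti τ * B)))) * S1 τ
        + (S1 τ * (Ti τ * B)) * S2 τ) + ((S2 τ * (Ti τ * B) + S1 τ * (-((Ti τ * B) * S1 τ * (Ti τ * B)))) * S1 τ
        + (S1 τ * (Ti τ * B)) * S2 τ)))
      + -((S2 τ - (S1 τ * (Ti τ * B) * S1 τ + S1 τ * (Ti τ * B) * S1 τ)) * ((Ti τ * B) * S1 τ)))))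
          - (3/4 : ℝ) • ((R * (S2 τ - (S1 τ * (Ti τ * B) * S1 τ + S1 τ * (Ti τ * B) * S1 τ))) * (R * (S2 τ - (S1 τ * (Ti τ * B) * S1 τ + S1 τ * (Ti τ * B) * S1 τ))))) * Ti τ := by
        rw [smulconj, smulconj]
        noncomm_ring
    _ = T τ * ((1/2 : ℝ) • (R * S3 τ) - (3/4 : ℝ) • ((R * S2 τ) * (R * S2 τ))) * Ti τ := by
        rw [inner_key R (S1 τ) (S2 τ) (S3 τ) (Ti τ * B) hRS1 hS1R]
    _ = T τ * matSchwarzian S τ * Ti τ := by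
        rw [matSchwarzian, pow_two, ← hS1_def, ← hS2_def, ← hS3_def, ← hR_def]
end

section
/- (Curvature of reduction, coordinate version, s first integrals) Let S_t be a smooth curve of symmetric n×n matrices with block structure at τ: writing indices in blocks of size n−s and s, suppose (Ṡ_τ^{-1})_{ij} = 0 whenever exactly one of i,j exceeds n−s, and let A be the invertible s×s matrix A = −(Ṡ_τ^{-1}) restricted to the last s×s block. Let C(M) denote the (n−s)×(n−s) matrix obtained by deleting the last s rows and columns of M. Then −(d/dτ)C(S_τ) · 𝕊(C(S_τ)) + C(Ṡ_τ 𝕊(S_τ)) = −(3/4) · [ Σ_{k,m=n−s+1}^n (S̈_τ)_{ik} (Ṡ_τ^{-1})_{km} (S̈_τ)_{mj} ]_{i,j=1}^{n−s}, where 𝕊 denotes the matrix Schwarzian 𝕊(S)_τ = (1/2) Ṡ_τ^{-1} S_τ^{(3)} − (3/4)(Ṡ_τ^{-1} S̈_τ)². -/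
open Matrix

/-- Key coordinate identity behind the change of the curvature form under
reduction by `s` first integrals.  Indices are split into a block of size
`n - s` (`Sum.inl`) and a block of size `s` (`Sum.inr`); `C(M)` is the leading
principal block `M.submatrix Sum.inl Sum.inl`.  If `Ṡ_τ⁻¹` is block diagonal,
then
`-(d/dτ C(S_τ))·𝕊(C(S_τ)) + C(Ṡ_τ 𝕊(S_τ))
   = -(3/4)[∑_{k,m} (S̈_τ)_{ik}(Ṡ_τ⁻¹)_{km}(S̈_τ)_{mj}]_{i,j}`
with `k, m` ranging over the last block. -/
theorem reduction_schwarzian_identity (m s : ℕ)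
    (S : ℝ → Matrix (Fin m ⊕ Fin s) (Fin m ⊕ Fin s) ℝ)
    (hsm : ∀ i j, ContDiff ℝ (⊤ : ℕ∞) fun t => S t i j)
    (hsymm : ∀ t, (S t).IsSymm)
    (τ : ℝ) (hreg : IsUnit (matDeriv 1 S τ).det)
    (hblock : ∀ (i : Fin m) (j : Fin s),
      (matDeriv 1 S τ)⁻¹ (Sum.inl i) (Sum.inr j) = 0 ∧
      (matDeriv 1 S τ)⁻¹ (Sum.inr j) (Sum.inl i) = 0) :
    -(matDeriv 1 (fun t => (S t).submatrix Sum.inl Sum.inl) τ)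
        * matSchwarzian (fun t => (S t).submatrix Sum.inl Sum.inl) τ
      + ((matDeriv 1 S τ) * matSchwarzian S τ).submatrix Sum.inl Sum.inl
    = Matrix.of fun i j : Fin m => -(3 / 4 : ℝ) *
        ∑ k : Fin s, ∑ m' : Fin s,
          (matDeriv 2 S τ) (Sum.inl i) (Sum.inr k)
            * (matDeriv 1 S τ)⁻¹ (Sum.inr k) (Sum.inr m')
            * (matDeriv 2 S τ) (Sum.inr m') (Sum.inl j) := by
  set B := matDeriv 1 S τ with hB
  set A2 := matDeriv 2 S τ with hA2
  set A3 := matDeriv 3 S τ with hA3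
  set E := B⁻¹ with hE
  have hE12 : ∀ (i : Fin m) (k : Fin s), E (Sum.inl i) (Sum.inr k) = 0 :=
    fun i k => (hblock i k).1
  have hE21 : ∀ (i : Fin m) (k : Fin s), E (Sum.inr k) (Sum.inl i) = 0 :=
    fun i k => (hblock i k).2
  have hBE : B * E = 1 := Matrix.mul_nonsing_inv B hreg
  have hEB : E * B = 1 := Matrix.nonsing_inv_mul B hreg
  -- derivatives of the reduced curve
  have hT1 : matDeriv 1 (fun t => (S t).submatrix Sum.inl Sum.inl) τ
      = B.submatrix Sum.inl Sum.inl := rfl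
  have hT2 : matDeriv 2 (fun t => (S t).submatrix Sum.inl Sum.inl) τ
      = A2.submatrix Sum.inl Sum.inl := rfl
  have hT3 : matDeriv 3 (fun t => (S t).submatrix Sum.inl Sum.inl) τ
      = A3.submatrix Sum.inl Sum.inl := rfl
  set T := B.submatrix Sum.inl Sum.inl with hTdef
  set F := E.submatrix Sum.inl Sum.inl with hFdef
  have hTF : T * F = 1 := by
    ext i j
    have h := congrFun (congrFun hBE (Sum.inl i)) (Sum.inl j)
    simp only [Matrix.mul_apply, Fintype.sum_sum_type, hE21, mul_zero,
      Finset.sum_const_zero, add_zero] at h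
    simpa [Matrix.mul_apply, Matrix.one_apply, Sum.inl.injEq, hTdef, hFdef] using h
  have hFT : F * T = 1 := by
    ext i j
    have h := congrFun (congrFun hEB (Sum.inl i)) (Sum.inl j)
    simp only [Matrix.mul_apply, Fintype.sum_sum_type, hE12, zero_mul,
      Finset.sum_const_zero, add_zero] at h
    simpa [Matrix.mul_apply, Matrix.one_apply, Sum.inl.injEq, hTdef, hFdef] using h
  have hFinv : T⁻¹ = F := Matrix.inv_eq_right_inv hTF
  have hcan : ∀ X : Matrix (Fin m ⊕ Fin s) (Fin m ⊕ Fin s) ℝ, B * (E * X) = X :=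
    fun X => by rw [← mul_assoc, hBE, one_mul]
  have hcanT : ∀ X : Matrix (Fin m) (Fin m) ℝ, T * (F * X) = X :=
    fun X => by rw [← mul_assoc, hTF, one_mul]
  have expS : B * matSchwarzian S τ
      = (1/2:ℝ) • A3 - (3/4:ℝ) • (A2 * E * A2) := by
    have h0 : matSchwarzian S τ = (1/2:ℝ) • (E * A3) - (3/4:ℝ) • (E*A2)^2 := rfl
    rw [h0, mul_sub, mul_smul_comm, mul_smul_comm, hcan, pow_two,
      show E*A2*(E*A2) = E*(A2*(E*A2)) by rw [mul_assoc], hcan, ← mul_assoc]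
  have expT : T * matSchwarzian (fun t => (S t).submatrix Sum.inl Sum.inl) τ
      = (1/2:ℝ) • (A3.submatrix Sum.inl Sum.inl)
        - (3/4:ℝ) • (A2.submatrix Sum.inl Sum.inl * F * A2.submatrix Sum.inl Sum.inl) := by
    have h0 : matSchwarzian (fun t => (S t).submatrix Sum.inl Sum.inl) τ
        = (1/2:ℝ) • (F * A3.submatrix Sum.inl Sum.inl)
          - (3/4:ℝ) • (F * A2.submatrix Sum.inl Sum.inl)^2 := by
      unfold matSchwarzian
      rw [hT1, hT2, hT3, hFinv]
    rw [h0, mul_sub, mul_smul_comm, mul_smul_comm, hcanT, pow_two,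
      show F*A2.submatrix Sum.inl Sum.inl*(F*A2.submatrix Sum.inl Sum.inl)
          = F*(A2.submatrix Sum.inl Sum.inl*(F*A2.submatrix Sum.inl Sum.inl)) by rw [mul_assoc],
      hcanT, ← mul_assoc]
  rw [hT1, neg_mul, expT, expS]
  ext i j
  simp only [Matrix.add_apply, Matrix.neg_apply, Matrix.sub_apply, Matrix.smul_apply,
    Matrix.submatrix_apply, Matrix.of_apply, smul_eq_mul, Matrix.mul_apply,
    Fintype.sum_sum_type, hFdef, hE12, hE21, mul_zero, zero_mul,
    Finset.sum_const_zero, add_zero, zero_add, Finset.sum_mul, Finset.mul_sum]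
  simp only [← Finset.mul_sum]
  rw [show (∑ x : Fin s, ∑ i_1 : Fin s,
        A2 (Sum.inl i) (Sum.inr i_1) * E (Sum.inr i_1) (Sum.inr x) * A2 (Sum.inr x) (Sum.inl j))
      = ∑ k : Fin s, ∑ m' : Fin s,
        A2 (Sum.inl i) (Sum.inr k) * E (Sum.inr k) (Sum.inr m') * A2 (Sum.inr m') (Sum.inl j)
      from Finset.sum_comm]
  ring
end
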